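/- For a ¬-free nested program P (a program with no occurrences of classical negation ¬) and consistent sets of literals X ⊆ Y, the pair (X,Y) is an SE-model of P if and only if (X⁺, Y⁺) is an SE-model of P, where Z⁺ denotes the set of atoms in Z. -/

import Mathlib

open scoped Classical

inductive Lit where
  | pos : ℕ → Lit
  | neg : ℕ → Lit
deriving DecidableEq

inductive Fml where
  | bot : Fml
  | top : Fml
  | lit : Lit → Fml
  | not : Fml → Fml
  | conj : Fml → Fml → Fml
  | disj : Fml → Fml → Fml
deriving DecidableEq

structure Rule where
  head : Fml
  body : Fml
deriving DecidableEq

abbrev Prog := Set Rule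

/-- A set of literals is consistent if it contains no complementary pair. -/
def Consistent (X : Set Lit) : Prop :=
  ∀ a : ℕ, ¬ (Lit.pos a ∈ X ∧ Lit.neg a ∈ X)

def Sat (X : Set Lit) : Fml → Prop
  | Fml.bot => False
  | Fml.top => True
  | Fml.lit l => l ∈ X
  | Fml.not F => ¬ Sat X F
  | Fml.conj F G => Sat X F ∧ Sat X G
  | Fml.disj F G => Sat X F ∨ Sat X G

def SatRule (X : Set Lit) (r : Rule) : Prop := Sat X r.body → Sat X r.head

def SatProg (X : Set Lit) (P : Prog) : Prop := ∀ r ∈ P, SatRule X r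

/-- The reduct of a formula relative to X. -/
noncomputable def Reduct (X : Set Lit) : Fml → Fml
  | Fml.bot => Fml.bot
  | Fml.top => Fml.top
  | Fml.lit l => Fml.lit l
  | Fml.not F => if Sat X F then Fml.bot else Fml.top
  | Fml.conj F G => Fml.conj (Reduct X F) (Reduct X G)
  | Fml.disj F G => Fml.disj (Reduct X F) (Reduct X G)

noncomputable def ReductRule (X : Set Lit) (r : Rule) : Rule :=
  ⟨Reduct X r.head, Reduct X r.body⟩

noncomputable def ReductProg (X : Set Lit) (P : Prog) : Prog :=
  ReductRule X '' P

/-- Y is an answer set for P: Y is minimal among consistent sets satisfying the reduct of P w.r.t. Y. -/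
def AnswerSet (Y : Set Lit) (P : Prog) : Prop :=
  Consistent Y ∧ SatProg Y (ReductProg Y P) ∧
    ∀ Z : Set Lit, Consistent Z → SatProg Z (ReductProg Y P) → Z ⊆ Y → Z = Y

def SEModel (P : Prog) (X Y : Set Lit) : Prop :=
  Consistent X ∧ Consistent Y ∧ X ⊆ Y ∧ SatProg Y P ∧ SatProg X (ReductProg Y P)

def StrongEq (P Q : Prog) : Prop :=
  ∀ R : Prog, ∀ Y : Set Lit, AnswerSet Y (P ∪ R) ↔ AnswerSet Y (Q ∪ R)

def Fml.negFree : Fml → Prop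
  | Fml.bot => True
  | Fml.top => True
  | Fml.lit l => ∃ a, l = Lit.pos a
  | Fml.not F => F.negFree
  | Fml.conj F G => F.negFree ∧ G.negFree
  | Fml.disj F G => F.negFree ∧ G.negFree

def ProgNegFree (P : Prog) : Prop := ∀ r ∈ P, r.head.negFree ∧ r.body.negFree

/-- The set of atoms (positive literals) in a set of literals. -/
def PosLits (Z : Set Lit) : Set Lit := {l ∈ Z | ∃ a, l = Lit.pos a}

def AtomsOnly (Z : Set Lit) : Prop := ∀ l ∈ Z, ∃ a, l = Lit.pos a

/-! A ¬-free formula mentions only atoms, so whether a set of literals satisfies it — and hence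
also the reduct it induces — depends only on the atoms of that set. Thus passing from `Z` to `Z⁺`
changes neither `Y ⊨ P` nor `P^Y` nor `X ⊨ P^Y`, while consistency and `X ⊆ Y` pass to atoms. -/

theorem Consistent.posLits {Z : Set Lit} (hZ : Consistent Z) : Consistent (PosLits Z) :=
  fun a h => hZ a ⟨h.1.1, h.2.1⟩

theorem posLits_mono {X Y : Set Lit} (hXY : X ⊆ Y) : PosLits X ⊆ PosLits Y :=
  fun _ hl => ⟨hXY hl.1, hl.2⟩

namespace Fml.negFree

theorem sat_posLits_iff {F : Fml} (hF : F.negFree) (X : Set Lit) :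
    Sat (PosLits X) F ↔ Sat X F := by
  induction F with
  | bot | top => rfl
  | lit l =>
    obtain ⟨a, rfl⟩ := hF
    simp [Sat, PosLits]
  | not F ih => simp only [Sat, ih hF]
  | conj F G ihF ihG | disj F G ihF ihG => simp only [Sat, ihF hF.1, ihG hF.2]

theorem reduct {F : Fml} (hF : F.negFree) (Y : Set Lit) : (Reduct Y F).negFree := by
  induction F with
  | bot | top | lit l => exact hF
  | not F =>
    simp only [Reduct]
    split <;> trivial
  | conj F G ihF ihG | disj F G ihF ihG => exact ⟨ihF hF.1, ihG hF.2⟩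

theorem reduct_posLits {F : Fml} (hF : F.negFree) (Y : Set Lit) :
    Reduct (PosLits Y) F = Reduct Y F := by
  induction F with
  | bot | top | lit l => rfl
  | not F => simp only [Reduct, sat_posLits_iff (F := F) hF Y]
  | conj F G ihF ihG | disj F G ihF ihG => simp only [Reduct, ihF hF.1, ihG hF.2]

end Fml.negFree

namespace ProgNegFree

variable {P : Prog} (hP : ProgNegFree P)
include hP

theorem satProg_posLits_iff (X : Set Lit) : SatProg (PosLits X) P ↔ SatProg X P := by
  refine forall₂_congr fun r hr => ?_
  rw [SatRule, SatRule, (hP r hr).1.sat_posLits_iff, (hP r hr).2.sat_posLits_iff]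

theorem reductProg (Y : Set Lit) : ProgNegFree (ReductProg Y P) := by
  rintro _ ⟨r, hr, rfl⟩
  exact ⟨(hP r hr).1.reduct Y, (hP r hr).2.reduct Y⟩

theorem reductProg_posLits (Y : Set Lit) : ReductProg (PosLits Y) P = ReductProg Y P := by
  refine Set.image_congr fun r hr => ?_
  rw [ReductRule, ReductRule, (hP r hr).1.reduct_posLits, (hP r hr).2.reduct_posLits]

end ProgNegFree

/-- For a ¬-free program P and consistent X ⊆ Y, (X,Y) is an SE-model
of P iff (X⁺,Y⁺) is. -/
theorem stmt6 (P : Prog) (hP : ProgNegFree P) (X Y : Set Lit)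
    (hX : Consistent X) (hY : Consistent Y) (hXY : X ⊆ Y) :
    SEModel P X Y ↔ SEModel P (PosLits X) (PosLits Y) := by
  unfold SEModel
  rw [hP.reductProg_posLits, hP.satProg_posLits_iff, (hP.reductProg Y).satProg_posLits_iff]
  exact ⟨fun ⟨_, _, _, hSY, hSX⟩ => ⟨hX.posLits, hY.posLits, posLits_mono hXY, hSY, hSX⟩,
    fun ⟨_, _, _, hSY, hSX⟩ => ⟨hX, hY, hXY, hSY, hSX⟩⟩
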